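/- Let a > b be real numbers and define on ℝ: Φ(x) = ½(x-a)² + (a-b)² for x < 2a-b, Φ(x) = ¼(x-b)² + ½(a-b)² for x ≥ 2a-b; Ψ(x) = ¼(x-a)² + ½(a-b)² for x < 2b-a, Ψ(x) = ½(x-b)² + (a-b)² for x ≥ 2b-a. Then Φ and Ψ are C^{1,1} functions, Φ = 2Ψ on (-∞, 2b-a] ∩ (-∞, 2a-b], Ψ ≥ ½Φ and Φ ≥ ½Ψ everywhere, and |Φ(x) - P(x)| + |Ψ(x) - Q(x)| ≤ C(a-b)² for |x| ≤ 1, where P(x) = ½min{x-a,0}² + ¼max{x-b,0}², Q(x) = ¼min{x-a,0}² + ½max{x-b,0}², and C is an absolute constant. -/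

import Mathlib

/-- First component of the 1-D approximate solution near unstable half-space profiles. -/
noncomputable def Phi2 (a b : ℝ) (x : ℝ) : ℝ :=
  if x < 2*a - b then (1/2) * (x - a)^2 + (a - b)^2
  else (1/4) * (x - b)^2 + (1/2) * (a - b)^2

/-- Second component of the 1-D approximate solution near unstable half-space profiles. -/
noncomputable def Psi2 (a b : ℝ) (x : ℝ) : ℝ :=
  if x < 2*b - a then (1/4) * (x - a)^2 + (1/2) * (a - b)^2
  else (1/2) * (x - b)^2 + (a - b)^2

/-- The unstable half-space profile `P`. -/
noncomputable def Pun (a b : ℝ) (x : ℝ) : ℝ :=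
  (1/2) * (min (x - a) 0)^2 + (1/4) * (max (x - b) 0)^2

/-- The unstable half-space profile `Q`. -/
noncomputable def Qun (a b : ℝ) (x : ℝ) : ℝ :=
  (1/4) * (min (x - a) 0)^2 + (1/2) * (max (x - b) 0)^2

/-! Both profiles are a quadratic plus a quarter of a squared ramp:
`Phi2 a b x = (x - b)²/4 + (a - b)²/2 + min (x - (2a - b)) 0 ²/4` and
`Psi2 a b x = (x - a)²/4 + (a - b)²/2 + max (x - (2b - a)) 0 ²/4`.
The squared ramp `max s 0 ^ 2` is differentiable with derivative `2 * max s 0`, which is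
1-Lipschitz, so both profiles are `C^{1,1}`. The comparison and error estimates are inequalities
between quadratics, checked on each piece of the definitions. -/

open Filter Topology Asymptotics

theorem hasDerivAt_max_zero_sq (t : ℝ) :
    HasDerivAt (fun s : ℝ => max s 0 ^ 2) (2 * max t 0) t := by
  rcases lt_trichotomy t 0 with ht | rfl | ht
  · have hzero : (fun s : ℝ => max s 0 ^ 2) =ᶠ[𝓝 t] fun _ => 0 := by
      filter_upwards [Iio_mem_nhds ht] with s hs
      simp [max_eq_right (le_of_lt (Set.mem_Iio.mp hs))]
    rw [max_eq_right ht.le, mul_zero]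
    exact (hasDerivAt_const t 0).congr_of_eventuallyEq hzero
  · have hquadratic : (fun s : ℝ => max s 0 ^ 2) =O[𝓝 0] fun s => s ^ 2 :=
      IsBigO.of_bound 1 <| Eventually.of_forall fun s => by
        rw [one_mul, Real.norm_eq_abs, Real.norm_eq_abs, abs_pow, abs_pow]
        exact pow_le_pow_left₀ (abs_nonneg _) (by simpa using abs_max_sub_max_le_abs s 0 0) 2
    simpa [hasDerivAt_iff_isLittleO_nhds_zero] using
      hquadratic.trans_isLittleO (isLittleO_pow_id one_lt_two)
  · have hsq : (fun s : ℝ => max s 0 ^ 2) =ᶠ[𝓝 t] fun s => s ^ 2 := by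
      filter_upwards [Ioi_mem_nhds ht] with s hs
      simp [max_eq_left (le_of_lt (Set.mem_Ioi.mp hs))]
    rw [max_eq_left ht.le]
    exact ((hasDerivAt_pow 2 t).congr_of_eventuallyEq hsq).congr_deriv (by ring)

theorem hasDerivAt_min_zero_sq (t : ℝ) :
    HasDerivAt (fun s : ℝ => min s 0 ^ 2) (2 * min t 0) t := by
  have hreflect : (fun s : ℝ => min s 0 ^ 2) = (fun s => max s 0 ^ 2) ∘ Neg.neg :=
    funext fun s => by rcases le_total s 0 with h | h <;> simp [h]
  rw [hreflect]
  refine ((hasDerivAt_max_zero_sq (-t)).comp t (hasDerivAt_neg t)).congr_deriv ?_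
  rcases le_total t 0 with h | h <;> simp [h]

theorem contDiff_one_and_lipschitzWith_deriv_of_hasDerivAt {𝕜 E : Type*}
    [NontriviallyNormedField 𝕜] [NormedAddCommGroup E] [NormedSpace 𝕜 E]
    {f f' : 𝕜 → E} {K : NNReal}
    (hf : ∀ x, HasDerivAt f (f' x) x) (hf' : LipschitzWith K f') :
    ContDiff 𝕜 1 f ∧ LipschitzWith K (deriv f) := by
  have hderiv : deriv f = f' := funext fun x => (hf x).deriv
  rw [contDiff_one_iff_deriv, hderiv]
  exact ⟨⟨fun x => (hf x).differentiableAt, hf'.continuous⟩, hf'⟩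

theorem LipschitzWith.half_sub_add_half {g : ℝ → ℝ} (hg : LipschitzWith 1 g) (p : ℝ) :
    LipschitzWith 1 fun x => (x - p) / 2 + g x / 2 := by
  refine LipschitzWith.mk_one fun x y => ?_
  have hgxy : |g x - g y| ≤ |x - y| := by simpa [Real.dist_eq] using hg.dist_le_mul x y
  rw [Real.dist_eq, Real.dist_eq]
  calc |(x - p) / 2 + g x / 2 - ((y - p) / 2 + g y / 2)|
        = |(x - y) / 2 + (g x - g y) / 2| := by ring_nf
    _ ≤ |(x - y) / 2| + |(g x - g y) / 2| := abs_add_le _ _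
    _ ≤ |x - y| := by rw [abs_div, abs_div, abs_two]; linarith

theorem Phi2_eq_add_min_sq (a b x : ℝ) :
    Phi2 a b x = (x - b) ^ 2 / 4 + (a - b) ^ 2 / 2 + min (x - (2 * a - b)) 0 ^ 2 / 4 := by
  unfold Phi2
  split_ifs with h
  · rw [min_eq_left (by linarith)]; ring
  · rw [min_eq_right (by linarith)]; ring

theorem Psi2_eq_add_max_sq (a b x : ℝ) :
    Psi2 a b x = (x - a) ^ 2 / 4 + (a - b) ^ 2 / 2 + max (x - (2 * b - a)) 0 ^ 2 / 4 := by
  unfold Psi2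
  split_ifs with h
  · rw [max_eq_right (by linarith)]; ring
  · rw [max_eq_left (by linarith)]; ring

theorem hasDerivAt_Phi2 (a b x : ℝ) :
    HasDerivAt (Phi2 a b) ((x - b) / 2 + min (x - (2 * a - b)) 0 / 2) x := by
  have hramp := (hasDerivAt_min_zero_sq _).comp x ((hasDerivAt_id x).sub_const (2 * a - b))
  have hsq := ((hasDerivAt_id x).sub_const b).pow 2
  rw [show Phi2 a b = _ from funext (Phi2_eq_add_min_sq a b)]
  exact (((hsq.div_const 4).add_const _).add (hramp.div_const 4)).congr_deriv <| by
    simp only [Nat.cast_ofNat, id_eq, Nat.add_one_sub_one, pow_one, mul_one]; ring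

theorem hasDerivAt_Psi2 (a b x : ℝ) :
    HasDerivAt (Psi2 a b) ((x - a) / 2 + max (x - (2 * b - a)) 0 / 2) x := by
  have hramp := (hasDerivAt_max_zero_sq _).comp x ((hasDerivAt_id x).sub_const (2 * b - a))
  have hsq := ((hasDerivAt_id x).sub_const a).pow 2
  rw [show Psi2 a b = _ from funext (Psi2_eq_add_max_sq a b)]
  exact (((hsq.div_const 4).add_const _).add (hramp.div_const 4)).congr_deriv <| by
    simp only [Nat.cast_ofNat, id_eq, Nat.add_one_sub_one, pow_one, mul_one]; ring

theorem contDiff_Phi2_and_lipschitzWith_deriv (a b : ℝ) :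
    ContDiff ℝ 1 (Phi2 a b) ∧ LipschitzWith 1 (deriv (Phi2 a b)) :=
  contDiff_one_and_lipschitzWith_deriv_of_hasDerivAt (hasDerivAt_Phi2 a b)
    (((IsometryEquiv.subRight _).isometry.lipschitz.min_const 0).half_sub_add_half b)

theorem contDiff_Psi2_and_lipschitzWith_deriv (a b : ℝ) :
    ContDiff ℝ 1 (Psi2 a b) ∧ LipschitzWith 1 (deriv (Psi2 a b)) :=
  contDiff_one_and_lipschitzWith_deriv_of_hasDerivAt (hasDerivAt_Psi2 a b)
    (((IsometryEquiv.subRight _).isometry.lipschitz.max_const 0).half_sub_add_half a)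

theorem Phi2_eq_two_mul_Psi2 {a b x : ℝ} (hb : x ≤ 2 * b - a) (ha : x ≤ 2 * a - b) :
    Phi2 a b x = 2 * Psi2 a b x := by
  unfold Phi2 Psi2
  split_ifs with h1 h2 h2
  · ring
  · obtain rfl : x = 2 * b - a := le_antisymm hb (not_lt.1 h2)
    ring
  · obtain rfl : x = 2 * a - b := le_antisymm ha (not_lt.1 h1)
    ring
  · obtain rfl : a = b := by linarith
    obtain rfl : x = a := by linarith
    ring

theorem half_Phi2_le_Psi2 (a b x : ℝ) : Phi2 a b x / 2 ≤ Psi2 a b x := by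
  unfold Phi2 Psi2
  split_ifs <;>
    nlinarith [sq_nonneg (x - a), sq_nonneg (x - b), sq_nonneg (a - b),
      sq_nonneg (x + a - 2 * b)]

theorem half_Psi2_le_Phi2 (a b x : ℝ) : Psi2 a b x / 2 ≤ Phi2 a b x := by
  unfold Phi2 Psi2
  split_ifs <;>
    nlinarith [sq_nonneg (x - a), sq_nonneg (x - b), sq_nonneg (a - b),
      sq_nonneg (x - 2 * a + b)]

theorem abs_Phi2_sub_Pun_le (a b x : ℝ) : |Phi2 a b x - Pun a b x| ≤ 2 * (a - b) ^ 2 := by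
  unfold Phi2 Pun
  rcases le_total (x - a) 0 with h1 | h1 <;> rcases le_total (x - b) 0 with h2 | h2 <;>
    split_ifs <;>
    simp only [min_eq_left h1, min_eq_right h1, max_eq_right h2, max_eq_left h2] <;>
    rw [abs_le] <;> constructor <;>
    nlinarith [sq_nonneg (x - a), sq_nonneg (x - b), sq_nonneg (a - b), sq_nonneg (x - 2 * a + b)]

theorem abs_Psi2_sub_Qun_le (a b x : ℝ) : |Psi2 a b x - Qun a b x| ≤ 2 * (a - b) ^ 2 := by
  unfold Psi2 Qun
  rcases le_total (x - a) 0 with h1 | h1 <;> rcases le_total (x - b) 0 with h2 | h2 <;>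
    split_ifs <;>
    simp only [min_eq_left h1, min_eq_right h1, max_eq_right h2, max_eq_left h2] <;>
    rw [abs_le] <;> constructor <;>
    nlinarith [sq_nonneg (x - a), sq_nonneg (x - b), sq_nonneg (a - b), sq_nonneg (x - 2 * b + a)]

/-- Properties of the 1-D approximate solution near unstable half-space profiles. -/
theorem stmt6 : ∃ C > (0:ℝ), ∀ a b : ℝ, b < a →
    (ContDiff ℝ 1 (Phi2 a b) ∧ ∃ L : NNReal, LipschitzWith L (deriv (Phi2 a b))) ∧
    (ContDiff ℝ 1 (Psi2 a b) ∧ ∃ L : NNReal, LipschitzWith L (deriv (Psi2 a b))) ∧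
    (∀ x : ℝ, x ≤ 2*b - a → x ≤ 2*a - b → Phi2 a b x = 2 * Psi2 a b x) ∧
    (∀ x : ℝ, Phi2 a b x / 2 ≤ Psi2 a b x ∧ Psi2 a b x / 2 ≤ Phi2 a b x) ∧
    (∀ x : ℝ, |x| ≤ 1 →
      |Phi2 a b x - Pun a b x| + |Psi2 a b x - Qun a b x| ≤ C * (a - b)^2) := by
  refine ⟨4, by norm_num, fun a b _ => ?_⟩
  obtain ⟨hPhi, hPhi'⟩ := contDiff_Phi2_and_lipschitzWith_deriv a b
  obtain ⟨hPsi, hPsi'⟩ := contDiff_Psi2_and_lipschitzWith_deriv a b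
  refine ⟨⟨hPhi, 1, hPhi'⟩, ⟨hPsi, 1, hPsi'⟩, fun x => Phi2_eq_two_mul_Psi2,
    fun x => ⟨half_Phi2_le_Psi2 a b x, half_Psi2_le_Phi2 a b x⟩, fun x _ => ?_⟩
  linarith [abs_Phi2_sub_Pun_le a b x, abs_Psi2_sub_Qun_le a b x]
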